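/- arXiv:2506.23222 — 3 statements merged into one kernel-verified Lean document; each statement's English description precedes it below -/
import Mathlib

section
/- Let S be a nonempty finite set of linear endomorphisms of a finite-dimensional real normed space. Then σ̂(S) < 1 if and only if there exists a positive integer q such that for every n ≥ q and every a_1, ..., a_n ∈ S one has ‖a_n ∘ ⋯ ∘ a_1‖ < 1/2. -/
/-- `σ̂ₙ(S)`: the supremum of operator norms of `n`-fold products (compositions) of
elements of `S`. -/
noncomputable def sigmaN {V : Type*} [NormedAddCommGroup V] [NormedSpace ℝ V]
    (S : Set (V →L[ℝ] V)) (n : ℕ) : ℝ :=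
  sSup {x : ℝ | ∃ l : List (V →L[ℝ] V), l.length = n ∧ (∀ a ∈ l, a ∈ S) ∧ x = ‖l.prod‖}

/-- The joint spectral radius of `S`. -/
noncomputable def jointSpecRad {V : Type*} [NormedAddCommGroup V] [NormedSpace ℝ V]
    (S : Set (V →L[ℝ] V)) : ℝ :=
  sInf {x : ℝ | ∃ n : ℕ, 1 ≤ n ∧ x = sigmaN S n ^ ((1 : ℝ) / n)}

section Aux

variable {V : Type*} [NormedAddCommGroup V] [NormedSpace ℝ V]

private def prodSet (S : Set (V →L[ℝ] V)) (n : ℕ) : Set ℝ :=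
  {x : ℝ | ∃ l : List (V →L[ℝ] V), l.length = n ∧ (∀ a ∈ l, a ∈ S) ∧ x = ‖l.prod‖}

private lemma sigmaN_eq (S : Set (V →L[ℝ] V)) (n : ℕ) : sigmaN S n = sSup (prodSet S n) := rfl

private lemma prodSet_finite (S : Set (V →L[ℝ] V)) (hfin : S.Finite) (n : ℕ) :
    (prodSet S n).Finite := by
  haveI := hfin.fintype
  have hsub : prodSet S n ⊆
      Set.range (fun f : Fin n → S => ‖(List.ofFn (fun i => (f i : V →L[ℝ] V))).prod‖) := by
    rintro x ⟨l, rfl, hmem, rfl⟩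
    refine ⟨fun i => ⟨l.get i, hmem _ (l.get_mem _)⟩, ?_⟩
    simp [List.ofFn_get]
  exact (Set.finite_range _).subset hsub

private lemma prodSet_nonempty (S : Set (V →L[ℝ] V)) (hne : S.Nonempty) (n : ℕ) :
    (prodSet S n).Nonempty := by
  obtain ⟨a, ha⟩ := hne
  exact ⟨‖(List.replicate n a).prod‖, List.replicate n a, List.length_replicate,
    fun b hb => (List.eq_of_mem_replicate hb) ▸ ha, rfl⟩

private lemma norm_le_sigmaN (S : Set (V →L[ℝ] V)) (hfin : S.Finite)
    (l : List (V →L[ℝ] V)) (hmem : ∀ a ∈ l, a ∈ S) :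
    ‖l.prod‖ ≤ sigmaN S l.length :=
  le_csSup (prodSet_finite S hfin _).bddAbove ⟨l, rfl, hmem, rfl⟩

private lemma sigmaN_nonneg (S : Set (V →L[ℝ] V)) (hfin : S.Finite) (hne : S.Nonempty)
    (n : ℕ) : 0 ≤ sigmaN S n := by
  obtain ⟨x, l, hl, hmem, rfl⟩ := prodSet_nonempty S hne n
  exact le_trans (norm_nonneg _) (hl ▸ norm_le_sigmaN S hfin l hmem)

private lemma sigmaN_mem (S : Set (V →L[ℝ] V)) (hfin : S.Finite) (hne : S.Nonempty)
    (n : ℕ) : sigmaN S n ∈ prodSet S n :=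
  (prodSet_nonempty S hne n).csSup_mem (prodSet_finite S hfin n)

private lemma key_bound (S : Set (V →L[ℝ] V)) (hfin : S.Finite) (hne : S.Nonempty)
    (n : ℕ) (hn : 1 ≤ n) (C : ℝ)
    (hCsmall : ∀ l : List (V →L[ℝ] V), (∀ a ∈ l, a ∈ S) → l.length < n → ‖l.prod‖ ≤ C) :
    ∀ L : ℕ, ∀ l : List (V →L[ℝ] V), l.length = L → (∀ a ∈ l, a ∈ S) →
      ‖l.prod‖ ≤ sigmaN S n ^ (L / n) * C := by
  intro L
  induction L using Nat.strong_induction_on with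
  | _ L ih =>
    intro l hl hmem
    rcases lt_or_ge L n with hLn | hLn
    · rw [Nat.div_eq_of_lt hLn, pow_zero, one_mul]
      exact hCsmall l hmem (hl ▸ hLn)
    · have hL0 : 0 < L := lt_of_lt_of_le hn hLn
      set l1 := l.take n with hl1
      set l2 := l.drop n with hl2
      have hlen1 : l1.length = n := by
        simp [hl1, hl, min_eq_left hLn]
      have hlen2 : l2.length = L - n := by simp [hl2, hl]
      have hmem1 : ∀ a ∈ l1, a ∈ S := fun a ha => hmem a (List.mem_of_mem_take ha)
      have hmem2 : ∀ a ∈ l2, a ∈ S := fun a ha => hmem a (List.mem_of_mem_drop ha)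
      have h1 : ‖l1.prod‖ ≤ sigmaN S n := hlen1 ▸ norm_le_sigmaN S hfin l1 hmem1
      have h2 : ‖l2.prod‖ ≤ sigmaN S n ^ ((L - n) / n) * C :=
        ih (L - n) (Nat.sub_lt hL0 hn) l2 hlen2 hmem2
      have hsplit : l = l1 ++ l2 := (List.take_append_drop n l).symm
      have hmul : ‖l.prod‖ ≤ ‖l1.prod‖ * ‖l2.prod‖ := by
        rw [hsplit, List.prod_append]; exact norm_mul_le _ _
      have hC0 : 0 ≤ sigmaN S n ^ ((L - n) / n) * C :=
        le_trans (norm_nonneg _) h2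
      have : ‖l.prod‖ ≤ sigmaN S n * (sigmaN S n ^ ((L - n) / n) * C) :=
        hmul.trans (mul_le_mul h1 h2 (norm_nonneg _) (sigmaN_nonneg S hfin hne n))
      have hdiv : L / n = (L - n) / n + 1 := Nat.div_eq_sub_div hn hLn
      rw [hdiv, pow_succ]
      calc ‖l.prod‖ ≤ sigmaN S n * (sigmaN S n ^ ((L - n) / n) * C) := this
        _ = sigmaN S n ^ ((L - n) / n) * sigmaN S n * C := by ring

end Aux

/-- `σ̂(S) < 1` iff there is a positive integer `q` such that all products
of at least `q` elements of `S` have operator norm `< 1/2`. -/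
theorem jointSpecRad_lt_one_iff_eventually_small
    {V : Type*} [NormedAddCommGroup V] [NormedSpace ℝ V] [FiniteDimensional ℝ V]
    (S : Set (V →L[ℝ] V)) (hfin : S.Finite) (hne : S.Nonempty) :
    jointSpecRad S < 1 ↔
      ∃ q : ℕ, 1 ≤ q ∧ ∀ l : List (V →L[ℝ] V), q ≤ l.length → (∀ a ∈ l, a ∈ S) →
        ‖l.prod‖ < 1 / 2 := by
  constructor
  · intro h
    -- extract some n with sigmaN S n < 1
    have hne' : {x : ℝ | ∃ n : ℕ, 1 ≤ n ∧ x = sigmaN S n ^ ((1 : ℝ) / n)}.Nonempty :=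
      ⟨_, 1, le_refl 1, rfl⟩
    have : ∃ x ∈ {x : ℝ | ∃ n : ℕ, 1 ≤ n ∧ x = sigmaN S n ^ ((1 : ℝ) / n)}, x < 1 := by
      by_contra hcon
      push_neg at hcon
      exact absurd (le_csInf hne' hcon) (not_le.mpr h)
    obtain ⟨x, ⟨n, hn1, rfl⟩, hx1⟩ := this
    have hcn : sigmaN S n < 1 := by
      by_contra hge
      push_neg at hge
      exact absurd (Real.one_le_rpow hge (by positivity)) (not_le.mpr hx1)
    set c := sigmaN S n with hc
    have hc0 : 0 ≤ c := sigmaN_nonneg S hfin hne n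
    -- bound for short products
    set C : ℝ := 1 + ∑ r ∈ Finset.range n, |sigmaN S r| with hC
    have hC1 : 1 ≤ C := by
      have : 0 ≤ ∑ r ∈ Finset.range n, |sigmaN S r| :=
        Finset.sum_nonneg fun _ _ => abs_nonneg _
      linarith
    have hCsmall : ∀ l : List (V →L[ℝ] V), (∀ a ∈ l, a ∈ S) → l.length < n →
        ‖l.prod‖ ≤ C := by
      intro l hmem hlen
      have h1 : ‖l.prod‖ ≤ sigmaN S l.length := norm_le_sigmaN S hfin l hmem
      have h2 : sigmaN S l.length ≤ |sigmaN S l.length| := le_abs_self _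
      have h3 : |sigmaN S l.length| ≤ ∑ r ∈ Finset.range n, |sigmaN S r| :=
        Finset.single_le_sum (f := fun r => |sigmaN S r|) (fun _ _ => abs_nonneg _) (Finset.mem_range.mpr hlen)
      linarith
    have hkey := key_bound S hfin hne n hn1 C hCsmall
    -- choose t₀
    have htend : Filter.Tendsto (fun t : ℕ => c ^ t * C) Filter.atTop (nhds 0) := by
      have := tendsto_pow_atTop_nhds_zero_of_lt_one hc0 hcn
      simpa using this.mul_const C
    have hev : ∀ᶠ t : ℕ in Filter.atTop, c ^ t * C < 1 / 2 := by
      exact htend.eventually_lt_const (by norm_num)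
    obtain ⟨t₀, ht₀⟩ := Filter.eventually_atTop.mp hev
    refine ⟨max 1 (n * t₀), le_max_left _ _, ?_⟩
    intro l hql hmem
    have hdivge : t₀ ≤ l.length / n := by
      rw [Nat.le_div_iff_mul_le (lt_of_lt_of_le one_pos hn1)]
      calc t₀ * n = n * t₀ := mul_comm _ _
        _ ≤ max 1 (n * t₀) := le_max_right _ _
        _ ≤ l.length := hql
    have hb := hkey l.length l rfl hmem
    have hmono : c ^ (l.length / n) * C ≤ c ^ t₀ * C := by
      apply mul_le_mul_of_nonneg_right _ (by linarith)
      exact pow_le_pow_of_le_one hc0 (le_of_lt hcn) hdivge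
    exact lt_of_le_of_lt (hb.trans hmono) (ht₀ t₀ le_rfl)
  · rintro ⟨q, hq1, hq⟩
    have hmemq : sigmaN S q ∈ prodSet S q := sigmaN_mem S hfin hne q
    obtain ⟨l, hl, hmem, hval⟩ := hmemq
    have hσq : sigmaN S q < 1 / 2 := hval ▸ hq l (le_of_eq hl.symm) hmem
    have h0 : 0 ≤ sigmaN S q := sigmaN_nonneg S hfin hne q
    have hmem' : sigmaN S q ^ ((1 : ℝ) / q) ∈
        {x : ℝ | ∃ n : ℕ, 1 ≤ n ∧ x = sigmaN S n ^ ((1 : ℝ) / n)} := ⟨q, hq1, rfl⟩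
    have hbdd : BddBelow {x : ℝ | ∃ n : ℕ, 1 ≤ n ∧ x = sigmaN S n ^ ((1 : ℝ) / n)} := by
      refine ⟨0, ?_⟩
      rintro x ⟨n, hn, rfl⟩
      exact Real.rpow_nonneg (sigmaN_nonneg S hfin hne n) _
    have hle : jointSpecRad S ≤ sigmaN S q ^ ((1 : ℝ) / q) := csInf_le hbdd hmem'
    have hlt : sigmaN S q ^ ((1 : ℝ) / q) < 1 := by
      apply Real.rpow_lt_one h0 (by linarith) (by positivity)
    exact lt_of_le_of_lt hle hlt
end

section
/- Every square real matrix with nonnegative entries has a nonnegative real eigenvalue whose value equals its spectral radius. -/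
open scoped Matrix Topology ENNReal NNReal
open Filter

section PerronAux

attribute [local instance] Matrix.linftyOpNormedRing Matrix.linftyOpNormedAlgebra

variable {n : ℕ}

lemma PF17aux_entry_nnnorm_leX (B : Matrix (Fin n) (Fin n) ℂ) (i j : Fin n) : ‖B i j‖₊ ≤ ‖B‖₊ := by
  rw [Matrix.linfty_opNNNorm_def]
  exact le_trans (Finset.single_le_sum (f := fun j => ‖B i j‖₊) (fun _ _ => zero_le)
    (Finset.mem_univ j)) (Finset.le_sup (f := fun i => ∑ j, ‖B i j‖₊) (Finset.mem_univ i))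

lemma PF17aux_entry_norm_le (B : Matrix (Fin n) (Fin n) ℂ) (i j : Fin n) : ‖B i j‖ ≤ ‖B‖ := by
  have := PF17aux_entry_nnnorm_leX B i j
  rwa [← NNReal.coe_le_coe] at this

lemma PF17aux_continuous_entry (i j : Fin n) :
    Continuous (fun B : Matrix (Fin n) (Fin n) ℂ => B i j) := by
  apply (LipschitzWith.of_dist_le_mul (K := 1) (fun M N => ?_)).continuous
  rw [dist_eq_norm, dist_eq_norm, NNReal.coe_one, one_mul]
  exact_mod_cast PF17aux_entry_nnnorm_leX (M - N) i j

noncomputable def PF17aux_entryHom (i j : Fin n) : Matrix (Fin n) (Fin n) ℂ →+ ℂ :=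
  AddMonoidHom.mk' (fun M => M i j) (fun _ _ => rfl)

/-- summability of the Neumann series -/
lemma PF17aux_neumann_summable (B : Matrix (Fin n) (Fin n) ℂ) {t : ℝ}
    (hev : ∀ c, t < c → ∀ᶠ k in atTop, ‖B ^ k‖ ≤ c ^ k) (ht0 : 0 ≤ t)
    {z : ℂ} (hz : t < ‖z‖) :
    Summable (fun k : ℕ => ‖z⁻¹ ^ (k+1) • B ^ k‖) := by
  set s := ‖z‖ with hs
  have hcs : (t+s)/2 < s := by linarith
  have htc : t < (t+s)/2 := by linarith
  have hs0 : 0 < s := lt_of_le_of_lt ht0 hz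
  have hc0 : 0 < (t+s)/2 := lt_of_le_of_lt ht0 htc
  apply Summable.of_norm_bounded_eventually (g := fun k => s⁻¹ * (((t+s)/2)/s)^k)
  · exact (summable_geometric_of_lt_one (by positivity)
      (by rw [div_lt_one hs0]; exact hcs)).mul_left _
  · rw [Nat.cofinite_eq_atTop]
    filter_upwards [hev _ htc] with k hk
    rw [norm_norm]
    have hnorm : ‖z⁻¹ ^ (k+1) • B ^ k‖ = s⁻¹^(k+1) * ‖B ^ k‖ := by
      rw [norm_smul, norm_pow, norm_inv, ← hs]
    rw [hnorm]
    calc s⁻¹^(k+1) * ‖B ^ k‖ ≤ s⁻¹^(k+1) * ((t+s)/2)^k :=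
          mul_le_mul_of_nonneg_left hk (by positivity)
      _ = s⁻¹ * (((t+s)/2)/s)^k := by
          rw [div_eq_mul_inv _ s, mul_pow, pow_succ]
          ring

/-- the Neumann sum is the resolvent -/
lemma PF17aux_neumann_resolvent (B : Matrix (Fin n) (Fin n) ℂ) {t : ℝ}
    (hev : ∀ c, t < c → ∀ᶠ k in atTop, ‖B ^ k‖ ≤ c ^ k) (ht0 : 0 ≤ t)
    {z : ℂ} (hz : t < ‖z‖) :
    IsUnit (algebraMap ℂ (Matrix (Fin n) (Fin n) ℂ) z - B) ∧
    Ring.inverse (algebraMap ℂ (Matrix (Fin n) (Fin n) ℂ) z - B)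
      = ∑' k : ℕ, z⁻¹ ^ (k+1) • B ^ k := by
  have hs0 : 0 < ‖z‖ := lt_of_le_of_lt ht0 hz
  have hz0 : z ≠ 0 := fun h => by simp [h] at hs0
  set X := algebraMap ℂ (Matrix (Fin n) (Fin n) ℂ) z - B with hX
  have hsum := (PF17aux_neumann_summable B hev ht0 hz).of_norm
  set c := fun k : ℕ => z⁻¹ ^ (k+1) • B ^ k with hcdef
  set S := ∑' k, c k with hS
  have hd : ∀ k : ℕ, X * c k = z⁻¹ ^ k • B ^ k - z⁻¹ ^ (k+1) • B ^ (k+1) := by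
    intro k
    rw [hX, sub_mul, Algebra.algebraMap_eq_smul_one, smul_mul_assoc, one_mul,
      smul_smul, mul_smul_comm, ← pow_succ']
    congr 2
    rw [pow_succ, mul_comm (z⁻¹^k), ← mul_assoc, mul_inv_cancel₀ hz0, one_mul]
  have hcomm : ∀ k : ℕ, c k * X = X * c k := by
    intro k
    have h1 : Commute X (B ^ k) :=
      Commute.sub_left (Algebra.commute_algebraMap_left z (B^k)) ((Commute.refl B).pow_right k)
    rw [hcdef]
    simp only
    rw [smul_mul_assoc, mul_smul_comm, h1.eq]
  have hdlim : Tendsto (fun N : ℕ => z⁻¹ ^ N • B ^ N) atTop (𝓝 0) := by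
    have h1 := hsum.tendsto_atTop_zero
    have h2 := h1.const_smul (z : ℂ)
    rw [smul_zero] at h2
    have : (fun N : ℕ => z • (z⁻¹ ^ (N+1) • B ^ N)) = fun N : ℕ => z⁻¹ ^ N • B ^ N := by
      funext N
      rw [smul_smul, pow_succ, mul_comm (z⁻¹^N), ← mul_assoc, mul_inv_cancel₀ hz0, one_mul]
    rwa [this] at h2
  -- left inverse
  have hXS : X * S = 1 := by
    have h1 : HasSum (fun k => X * c k) (X * S) := (hsum.hasSum.mapL (ContinuousLinearMap.mul ℂ _ X))
    have h2 := h1.tendsto_sum_nat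
    have h3 : ∀ N : ℕ, ∑ k ∈ Finset.range N, X * c k
        = 1 - z⁻¹ ^ N • B ^ N := by
      intro N
      simp only [hd]
      rw [Finset.sum_range_sub' (f := fun k => z⁻¹ ^ k • B ^ k)]
      simp
    simp only [h3] at h2
    have h4 : Tendsto (fun N : ℕ => (1 : Matrix (Fin n) (Fin n) ℂ) - z⁻¹ ^ N • B ^ N)
        atTop (𝓝 1) := by
      have := (tendsto_const_nhds (x := (1 : Matrix (Fin n) (Fin n) ℂ)) (f := atTop (α := ℕ))).sub hdlim
      simpa using this
    exact tendsto_nhds_unique h2 h4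
  have hSX : S * X = 1 := by
    have h1 : HasSum (fun k => c k * X) (S * X) := hsum.hasSum.mul_right X
    have h1' : HasSum (fun k => X * c k) (X * S) := hsum.hasSum.mul_left X
    have h2 : HasSum (fun k => X * c k) (S * X) := by
      simpa only [hcomm] using h1
    rw [h2.unique h1']
    exact hXS
  refine ⟨⟨⟨X, S, hXS, hSX⟩, rfl⟩, ?_⟩
  exact Ring.inverse_unit ⟨X, S, hXS, hSX⟩

lemma PF17aux_pow_entry_nonneg (A : Matrix (Fin n) (Fin n) ℝ) (h0 : ∀ i j, 0 ≤ A i j) (k : ℕ) :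
    ∀ i j, 0 ≤ (A ^ k) i j := by
  induction k with
  | zero => intro i j; by_cases h : i = j <;> simp [Matrix.one_apply, h]
  | succ k ih =>
    intro i j
    rw [pow_succ, Matrix.mul_apply]
    exact Finset.sum_nonneg fun l _ => mul_nonneg (ih i l) (h0 l j)

lemma PF17aux_map_pow_entry (A : Matrix (Fin n) (Fin n) ℝ) (k : ℕ) (i j : Fin n) :
    ((A.map Complex.ofReal) ^ k) i j = ((A ^ k) i j : ℂ) := by
  have : (A.map Complex.ofReal) ^ k = (A ^ k).map Complex.ofReal := by
    have h1 : Complex.ofRealHom.mapMatrix A = A.map Complex.ofReal := rfl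
    rw [← h1, ← map_pow]
    rfl
  rw [this, Matrix.map_apply]


set_option maxHeartbeats 1000000 in
/-- the entrywise resolvent comparison -/
lemma PF17aux_resolvent_nnnorm_mono (A : Matrix (Fin n) (Fin n) ℝ) (h0 : ∀ i j, 0 ≤ A i j) {t : ℝ}
    (hev : ∀ c, t < c → ∀ᶠ k in atTop, ‖(A.map Complex.ofReal) ^ k‖ ≤ c ^ k) (ht0 : 0 ≤ t)
    {z : ℂ} (hz : t < ‖z‖) :
    ‖Ring.inverse (algebraMap ℂ (Matrix (Fin n) (Fin n) ℂ) z - A.map Complex.ofReal)‖₊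
      ≤ ‖Ring.inverse (algebraMap ℂ (Matrix (Fin n) (Fin n) ℂ)
          ((‖z‖ : ℝ) : ℂ) - A.map Complex.ofReal)‖₊ := by
  have hs : (0:ℝ) < ‖z‖ := lt_of_le_of_lt ht0 hz
  have hzs : ‖((‖z‖ : ℝ) : ℂ)‖ = ‖z‖ := by
    rw [Complex.norm_of_nonneg hs.le]
  have hz' : t < ‖((‖z‖ : ℝ) : ℂ)‖ := by rw [hzs]; exact hz
  obtain ⟨hu_z, heq_z⟩ := PF17aux_neumann_resolvent (A.map Complex.ofReal) hev ht0 hz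
  obtain ⟨hu_s, heq_s⟩ := PF17aux_neumann_resolvent (A.map Complex.ofReal) hev ht0 hz'
  rw [heq_z, heq_s]
  have hsumz := (PF17aux_neumann_summable (A.map Complex.ofReal) hev ht0 hz)
  have hsums := (PF17aux_neumann_summable (A.map Complex.ofReal) hev ht0 hz')
  -- entrywise inequality
  have key : ∀ i j, ‖(∑' k : ℕ, z⁻¹ ^ (k+1) • (A.map Complex.ofReal) ^ k) i j‖₊
      ≤ ‖(∑' k : ℕ, (((‖z‖ : ℝ) : ℂ))⁻¹ ^ (k+1) • (A.map Complex.ofReal) ^ k) i j‖₊ := by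
    intro i j
    have ha0 : ∀ k, (0:ℝ) ≤ (A ^ k) i j := fun k => PF17aux_pow_entry_nonneg A h0 k i j
    set r : ℕ → ℝ := fun k => (‖z‖)⁻¹ ^ (k+1) * ((A ^ k) i j) with hr
    have hr0 : ∀ k, 0 ≤ r k := fun k => mul_nonneg (by positivity) (ha0 k)
    have hentry : ∀ (w : ℂ) (k : ℕ),
        (w⁻¹ ^ (k+1) • (A.map Complex.ofReal) ^ k) i j = w⁻¹ ^ (k+1) * (((A ^ k) i j : ℝ) : ℂ) := by
      intro w k
      simp only [Matrix.smul_apply, smul_eq_mul]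
      rw [PF17aux_map_pow_entry A k i j]
    have hz_entry : HasSum (fun k : ℕ => z⁻¹ ^ (k+1) * (((A ^ k) i j : ℝ) : ℂ))
        ((∑' k : ℕ, z⁻¹ ^ (k+1) • (A.map Complex.ofReal) ^ k) i j) := by
      have h := (hsumz.of_norm).hasSum.map (PF17aux_entryHom i j) (PF17aux_continuous_entry i j)
      simp only [Function.comp_def, PF17aux_entryHom, AddMonoidHom.mk'_apply, hentry] at h
      simpa only [hentry] using (show HasSum (fun k : ℕ => (z⁻¹ ^ (k+1) • (A.map Complex.ofReal) ^ k) i j)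
        ((∑' k : ℕ, z⁻¹ ^ (k+1) • (A.map Complex.ofReal) ^ k) i j) from h)
    have hs_entry : HasSum (fun k : ℕ => (((‖z‖:ℝ):ℂ))⁻¹ ^ (k+1) * (((A ^ k) i j : ℝ) : ℂ))
        ((∑' k : ℕ, (((‖z‖ : ℝ) : ℂ))⁻¹ ^ (k+1) • (A.map Complex.ofReal) ^ k) i j) := by
      have h := (hsums.of_norm).hasSum.map (PF17aux_entryHom i j) (PF17aux_continuous_entry i j)
      simp only [Function.comp_def, PF17aux_entryHom, AddMonoidHom.mk'_apply, hentry] at h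
      simpa only [hentry] using (show HasSum (fun k : ℕ => ((((‖z‖ : ℝ) : ℂ))⁻¹ ^ (k+1) • (A.map Complex.ofReal) ^ k) i j)
        ((∑' k : ℕ, (((‖z‖ : ℝ) : ℂ))⁻¹ ^ (k+1) • (A.map Complex.ofReal) ^ k) i j) from h)
    have hnorm_z : ∀ k, ‖z⁻¹ ^ (k+1) * (((A ^ k) i j : ℝ) : ℂ)‖ = r k := by
      intro k
      rw [norm_mul, norm_pow, norm_inv, Complex.norm_of_nonneg (ha0 k)]
    have hsum_r : Summable r := by
      refine Summable.of_nonneg_of_le hr0 (fun k => ?_) hsumz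
      rw [← hnorm_z k]
      calc ‖z⁻¹ ^ (k+1) * (((A ^ k) i j : ℝ) : ℂ)‖
          = ‖(z⁻¹ ^ (k+1) • (A.map Complex.ofReal) ^ k) i j‖ := by rw [hentry z k]
        _ ≤ ‖z⁻¹ ^ (k+1) • (A.map Complex.ofReal) ^ k‖ := PF17aux_entry_norm_le _ i j
    have hSs_eq : (∑' k : ℕ, (((‖z‖ : ℝ) : ℂ))⁻¹ ^ (k+1) • (A.map Complex.ofReal) ^ k) i j
        = ((∑' k, r k : ℝ) : ℂ) := by
      have h1 : HasSum (fun k => ((r k : ℝ) : ℂ)) ((∑' k, r k : ℝ) : ℂ) :=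
        hsum_r.hasSum.mapL Complex.ofRealCLM
      have h2 : ∀ k, ((r k : ℝ) : ℂ) = (((‖z‖:ℝ):ℂ))⁻¹ ^ (k+1) * (((A ^ k) i j : ℝ) : ℂ) := by
        intro k
        push_cast [hr]
        ring
      simp only [h2] at h1
      exact hs_entry.unique h1
    have hbound : ‖(∑' k : ℕ, z⁻¹ ^ (k+1) • (A.map Complex.ofReal) ^ k) i j‖ ≤ ∑' k, r k := by
      rw [← hz_entry.tsum_eq]
      calc ‖∑' k, z⁻¹ ^ (k+1) * (((A ^ k) i j : ℝ) : ℂ)‖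
          ≤ ∑' k, ‖z⁻¹ ^ (k+1) * (((A ^ k) i j : ℝ) : ℂ)‖ :=
            norm_tsum_le_tsum_norm (by simpa only [hnorm_z] using hsum_r)
        _ = ∑' k, r k := by simp only [hnorm_z]
    rw [← NNReal.coe_le_coe]
    simp only [coe_nnnorm]
    have hfin : ‖((∑' k, r k : ℝ) : ℂ)‖ = ∑' k, r k := by
      rw [Complex.norm_real, Real.norm_eq_abs, abs_of_nonneg (tsum_nonneg hr0)]
    rw [hSs_eq, hfin]
    exact hbound
  rw [Matrix.linfty_opNNNorm_def, Matrix.linfty_opNNNorm_def]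
  apply Finset.sup_mono_fun
  intro i _
  exact Finset.sum_le_sum fun j _ => key i j

lemma PF17aux_norm_one_matrix (hn : 1 ≤ n) : ‖(1 : Matrix (Fin n) (Fin n) ℂ)‖ = 1 := by
  haveI : Nonempty (Fin n) := ⟨⟨0, hn⟩⟩
  rw [← Matrix.diagonal_one, Matrix.linfty_opNorm_diagonal]
  simp [Pi.norm_def]
  exact Finset.sup_const Finset.univ_nonempty 1

lemma PF17aux_norm_algebraMap_matrix (hn : 1 ≤ n) (c : ℂ) :
    ‖algebraMap ℂ (Matrix (Fin n) (Fin n) ℂ) c‖ = ‖c‖ := by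
  rw [Algebra.algebraMap_eq_smul_one, norm_smul, PF17aux_norm_one_matrix hn, mul_one]

lemma PF17aux_specRad_eq (B : Matrix (Fin n) (Fin n) ℂ) (μ₀ : ℂ) (h₀ : μ₀ ∈ spectrum ℂ B)
    (hmax : ∀ μ ∈ spectrum ℂ B, ‖μ‖ ≤ ‖μ₀‖) :
    spectralRadius ℂ B = ENNReal.ofReal (‖μ₀‖) := by
  apply le_antisymm
  · apply iSup₂_le
    intro k hk
    rw [← enorm_eq_nnnorm, ← ofReal_norm]
    exact ENNReal.ofReal_le_ofReal (by simpa using hmax k hk)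
  · rw [ofReal_norm, enorm_eq_nnnorm]
    exact le_iSup₂ (f := fun k (_ : k ∈ spectrum ℂ B) => (‖k‖₊ : ℝ≥0∞)) μ₀ h₀

lemma PF17aux_my_eventually_norm_pow_le (B : Matrix (Fin n) (Fin n) ℂ) (hn : 1 ≤ n)
    {t c : ℝ} (ht : spectralRadius ℂ B = ENNReal.ofReal t) (h : t < c) (ht0 : 0 ≤ t) :
    ∀ᶠ k in atTop, ‖B ^ k‖ ≤ c ^ k := by
  haveI : Nonempty (Fin n) := ⟨⟨0, hn⟩⟩
  haveI : CompleteSpace (Matrix (Fin n) (Fin n) ℂ) := FiniteDimensional.complete ℂ _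
  have hg := spectrum.pow_nnnorm_pow_one_div_tendsto_nhds_spectralRadius B
  rw [ht] at hg
  have hlt : ENNReal.ofReal t < ENNReal.ofReal c := by
    rw [ENNReal.ofReal_lt_ofReal_iff (lt_of_le_of_lt ht0 h)]; exact h
  have hev := hg.eventually_lt_const hlt
  filter_upwards [hev, eventually_ge_atTop 1] with k hk hk1
  have hk0 : (k : ℝ) ≠ 0 := by positivity
  have key : (‖B ^ k‖₊ : ℝ≥0∞) = ((‖B ^ k‖₊ : ℝ≥0∞) ^ (1 / (k:ℝ))) ^ (k:ℕ) := by
    rw [← ENNReal.rpow_natCast (((‖B ^ k‖₊ : ℝ≥0∞) ^ (1 / (k:ℝ)))), ← ENNReal.rpow_mul,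
      one_div, inv_mul_cancel₀ hk0, ENNReal.rpow_one]
  have h2 : (‖B ^ k‖₊ : ℝ≥0∞) ≤ ENNReal.ofReal c ^ (k:ℕ) := by
    rw [key]
    exact pow_le_pow_left' hk.le k
  rw [← ENNReal.ofReal_pow (ht0.trans h.le), ← enorm_eq_nnnorm, ← ofReal_norm,
    ENNReal.ofReal_le_ofReal_iff (pow_nonneg (ht0.trans h.le) k)] at h2
  exact h2

lemma PF17aux_map_alg (A : Matrix (Fin n) (Fin n) ℝ) (t : ℝ) :
    (Complex.ofRealHom.mapMatrix (algebraMap ℝ (Matrix (Fin n) (Fin n) ℝ) t - A)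
      : Matrix (Fin n) (Fin n) ℂ)
    = algebraMap ℂ _ (t : ℂ) - A.map Complex.ofReal := by
  rw [map_sub]
  congr 1
  ext i j
  simp [Matrix.algebraMap_matrix_apply, RingHom.mapMatrix_apply, Matrix.map_apply]
  split <;> simp_all

lemma PF17aux_complex_mem_of_max (A : Matrix (Fin n) (Fin n) ℝ) (hn : 1 ≤ n)
    (h0 : ∀ i j, 0 ≤ A i j) (μ₀ : ℂ) (hμ₀ : μ₀ ∈ spectrum ℂ (A.map Complex.ofReal))
    (hmax : ∀ μ ∈ spectrum ℂ (A.map Complex.ofReal), ‖μ‖ ≤ ‖μ₀‖) :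
    ((‖μ₀‖ : ℝ) : ℂ) ∈ spectrum ℂ (A.map Complex.ofReal) := by
  haveI : Nonempty (Fin n) := ⟨⟨0, hn⟩⟩
  haveI : CompleteSpace (Matrix (Fin n) (Fin n) ℂ) := FiniteDimensional.complete ℂ _
  set t : ℝ := ‖μ₀‖ with htdef
  have ht0 : 0 ≤ t := norm_nonneg μ₀
  by_contra hC
  rcases eq_or_lt_of_le ht0 with h0t | h0t
  · -- t = 0 : μ₀ = 0 and (t:ℂ) = 0
    apply hC
    have hμ0 : μ₀ = 0 := by
      have habs : ‖μ₀‖ = 0 := by rw [← htdef, ← h0t]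
      exact norm_eq_zero.mp habs
    rw [← h0t]
    simpa [hμ0] using hμ₀
  -- t > 0
  have hsr : spectralRadius ℂ (A.map Complex.ofReal) = ENNReal.ofReal t :=
    PF17aux_specRad_eq _ μ₀ hμ₀ hmax
  have hev : ∀ c, t < c → ∀ᶠ k in atTop, ‖(A.map Complex.ofReal) ^ k‖ ≤ c ^ k :=
    fun c hc => PF17aux_my_eventually_norm_pow_le _ hn hsr hc ht0
  rw [spectrum.mem_iff, not_not] at hC
  -- continuity of the resolvent along the real axis at t
  set g : ℝ → Matrix (Fin n) (Fin n) ℂ :=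
    fun s => Ring.inverse (algebraMap ℂ (Matrix (Fin n) (Fin n) ℂ) ((s:ℝ):ℂ)
      - A.map Complex.ofReal) with hg
  have hgcont : ContinuousAt g t := by
    have h1 : ContinuousAt (fun s : ℝ => algebraMap ℂ (Matrix (Fin n) (Fin n) ℂ) ((s:ℝ):ℂ)
        - A.map Complex.ofReal) t := by
      apply ContinuousAt.sub
      · exact ((continuous_algebraMap ℂ (Matrix (Fin n) (Fin n) ℂ)).comp
          Complex.continuous_ofReal).continuousAt
      · exact continuousAt_const
    have h2 : ContinuousAt (Ring.inverse : Matrix (Fin n) (Fin n) ℂ → _)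
        (algebraMap ℂ (Matrix (Fin n) (Fin n) ℂ) ((t:ℝ):ℂ) - A.map Complex.ofReal) := by
      have h3 := NormedRing.inverse_continuousAt hC.unit
      rwa [IsUnit.unit_spec] at h3
    exact ContinuousAt.comp (x := t)
      (g := (Ring.inverse : Matrix (Fin n) (Fin n) ℂ → _))
      (f := fun s : ℝ => algebraMap ℂ (Matrix (Fin n) (Fin n) ℂ) ((s:ℝ):ℂ)
        - A.map Complex.ofReal) h2 h1
  have hnormt : Tendsto (fun s => ‖g s‖) (𝓝 t) (𝓝 ‖g t‖) := hgcont.norm.tendsto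
  have hub : ∀ᶠ s in 𝓝[>] t, ‖g s‖ < ‖g t‖ + 1 :=
    nhdsWithin_le_nhds (hnormt.eventually_lt_const (lt_add_of_pos_right _ one_pos))
  have hioo : ∀ᶠ s in 𝓝[>] t, s ∈ Set.Ioo t (t + (‖g t‖ + 2)⁻¹) := by
    apply Ioo_mem_nhdsGT_of_mem
    constructor
    · exact le_refl t
    · have : (0:ℝ) < (‖g t‖ + 2)⁻¹ := by positivity
      linarith
  obtain ⟨s, hs1, hs2⟩ := (hub.and hioo).exists
  obtain ⟨hst, hsu⟩ := hs2
  -- lower bound on ‖g s‖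
  have hts : (0:ℝ) < s - t := by linarith
  set zs : ℂ := ((s/t : ℝ) : ℂ) * μ₀ with hzs
  have habs_zs : ‖zs‖ = s := by
    rw [hzs, norm_mul, Complex.norm_real, Real.norm_eq_abs, abs_of_pos (div_pos (lt_trans h0t hst) h0t), ← htdef]
    field_simp
  have hzt : t < ‖zs‖ := by rw [habs_zs]; linarith
  obtain ⟨hu_zs, _⟩ := PF17aux_neumann_resolvent (A.map Complex.ofReal) hev ht0 hzt
  -- the resolvent at zs has large norm
  have hlow : (s - t)⁻¹ ≤ ‖Ring.inverse (algebraMap ℂ (Matrix (Fin n) (Fin n) ℂ) zs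
      - A.map Complex.ofReal)‖ := by
    set u := hu_zs.unit with hu
    have hmu : ¬ IsUnit (algebraMap ℂ (Matrix (Fin n) (Fin n) ℂ) μ₀ - A.map Complex.ofReal) :=
      spectrum.mem_iff.mp hμ₀
    by_contra hcon
    push_neg at hcon
    apply hmu
    have hinv : (↑u⁻¹ : Matrix (Fin n) (Fin n) ℂ)
        = Ring.inverse (algebraMap ℂ (Matrix (Fin n) (Fin n) ℂ) zs - A.map Complex.ofReal) := by
      rw [hu, ← Ring.inverse_unit hu_zs.unit]
      congr 1
    have hdist : ‖(algebraMap ℂ (Matrix (Fin n) (Fin n) ℂ) μ₀ - A.map Complex.ofReal)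
        - ((u : Matrix (Fin n) (Fin n) ℂ))‖ < ‖(↑u⁻¹ : Matrix (Fin n) (Fin n) ℂ)‖⁻¹ := by
      have huval : (u : Matrix (Fin n) (Fin n) ℂ)
          = algebraMap ℂ (Matrix (Fin n) (Fin n) ℂ) zs - A.map Complex.ofReal := rfl
      rw [huval]
      have h1 : (algebraMap ℂ (Matrix (Fin n) (Fin n) ℂ) μ₀ - A.map Complex.ofReal)
          - (algebraMap ℂ (Matrix (Fin n) (Fin n) ℂ) zs - A.map Complex.ofReal)
          = algebraMap ℂ (Matrix (Fin n) (Fin n) ℂ) (μ₀ - zs) := by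
        rw [map_sub, sub_sub_sub_cancel_right]
      rw [h1, PF17aux_norm_algebraMap_matrix hn]
      have h2 : ‖(μ₀ - zs)‖ = s - t := by
        rw [hzs]
        have : μ₀ - ((s/t : ℝ) : ℂ) * μ₀ = ((1 - s/t : ℝ) : ℂ) * μ₀ := by push_cast; ring
        rw [this, norm_mul, Complex.norm_real, Real.norm_eq_abs, ← htdef]
        rw [abs_of_nonpos (by rw [sub_nonpos, le_div_iff₀ h0t]; nlinarith)]
        field_simp
        ring
      rw [h2]
      -- ‖u⁻¹‖⁻¹ > s - t  since ‖u⁻¹‖ < (s-t)⁻¹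
      have h3 : ‖(↑u⁻¹ : Matrix (Fin n) (Fin n) ℂ)‖ < (s - t)⁻¹ := by
        rw [hinv]; exact hcon
      have h4 : 0 < ‖(↑u⁻¹ : Matrix (Fin n) (Fin n) ℂ)‖ := Units.norm_pos u⁻¹
      calc s - t = ((s-t)⁻¹)⁻¹ := by rw [inv_inv]
        _ < ‖(↑u⁻¹ : Matrix (Fin n) (Fin n) ℂ)‖⁻¹ := by
            exact inv_strictAnti₀ h4 h3
    exact (Units.ofNearby u _ hdist).isUnit
  -- resolvent comparison
  have hcomp := PF17aux_resolvent_nnnorm_mono A h0 hev ht0 hzt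
  rw [habs_zs] at hcomp
  have hcomp' : ‖Ring.inverse (algebraMap ℂ (Matrix (Fin n) (Fin n) ℂ) zs
      - A.map Complex.ofReal)‖ ≤ ‖g s‖ := by
    rw [hg]
    exact_mod_cast hcomp
  -- contradiction
  have hbig : (‖g t‖ + 2) < (s - t)⁻¹ := by
    have h5 : s - t < (‖g t‖ + 2)⁻¹ := by linarith
    calc ‖g t‖ + 2 = ((‖g t‖ + 2)⁻¹)⁻¹ := by rw [inv_inv]
      _ < (s - t)⁻¹ := inv_strictAnti₀ hts h5
  have : ‖g s‖ < ‖g s‖ := by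
    calc ‖g s‖ < ‖g t‖ + 1 := hs1
      _ < ‖g t‖ + 2 := by linarith
      _ < (s - t)⁻¹ := hbig
      _ ≤ ‖Ring.inverse (algebraMap ℂ (Matrix (Fin n) (Fin n) ℂ) zs - A.map Complex.ofReal)‖ := hlow
      _ ≤ ‖g s‖ := hcomp'
  exact absurd this (lt_irrefl _)

theorem PF17aux_perron_aux
    (n : ℕ) (hn : 1 ≤ n) (A : Matrix (Fin n) (Fin n) ℝ)
    (h0 : ∀ i j, 0 ≤ A i j) :
    ∃ t : ℝ, 0 ≤ t ∧ t ∈ spectrum ℝ A ∧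
      t = sSup ((fun z : ℂ => ‖z‖) '' spectrum ℂ (A.map Complex.ofReal)) ∧
      ∀ μ ∈ spectrum ℂ (A.map Complex.ofReal), ‖μ‖ ≤ t := by
  haveI : Nonempty (Fin n) := ⟨⟨0, hn⟩⟩
  haveI : CompleteSpace (Matrix (Fin n) (Fin n) ℂ) := FiniteDimensional.complete ℂ _
  have hne : (spectrum ℂ (A.map Complex.ofReal)).Nonempty := spectrum.nonempty _
  have hcpt : IsCompact (spectrum ℂ (A.map Complex.ofReal)) := spectrum.isCompact _
  obtain ⟨μ₀, hμ₀, hmax'⟩ := hcpt.exists_isMaxOn hne continuous_norm.continuousOn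
  have hmax : ∀ μ ∈ spectrum ℂ (A.map Complex.ofReal), ‖μ‖ ≤ ‖μ₀‖ :=
    fun μ hμ => hmax' hμ
  refine ⟨‖μ₀‖, norm_nonneg μ₀, ?_, ?_, hmax⟩
  · -- spectrum membership
    have hc := PF17aux_complex_mem_of_max A hn h0 μ₀ hμ₀ hmax
    rw [spectrum.mem_iff] at hc ⊢
    intro hu
    have hmap := hu.map (Complex.ofRealHom.mapMatrix (m := Fin n))
    rw [PF17aux_map_alg] at hmap
    exact hc hmap
  · -- sSup
    have hbdd : BddAbove ((fun z : ℂ => ‖z‖) '' spectrum ℂ (A.map Complex.ofReal)) :=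
      (hcpt.image continuous_norm).bddAbove
    apply le_antisymm
    · exact le_csSup hbdd ⟨μ₀, hμ₀, rfl⟩
    · apply csSup_le (hne.image _)
      rintro x ⟨μ, hμ, rfl⟩
      exact hmax μ hμ

end PerronAux

/-- Perron–Frobenius: every (nonempty) square real matrix with
nonnegative entries has a nonnegative real eigenvalue whose value equals its spectral
radius (the maximum modulus of its complex eigenvalues). -/
theorem nonneg_matrix_has_nonneg_eigenvalue_eq_specRad
    (n : ℕ) (hn : 1 ≤ n) (A : Matrix (Fin n) (Fin n) ℝ)
    (h0 : ∀ i j, 0 ≤ A i j) :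
    ∃ t : ℝ, 0 ≤ t ∧ t ∈ spectrum ℝ A ∧
      t = sSup ((fun z : ℂ => ‖z‖) '' spectrum ℂ (A.map Complex.ofReal)) ∧
      ∀ μ ∈ spectrum ℂ (A.map Complex.ofReal), ‖μ‖ ≤ t := by
  exact PF17aux_perron_aux n hn A h0
end

section
/- Let (X,d) be a metric space, b ∈ X, and let F be a finite family of self-maps of X. Suppose there are ρ ∈ (0,1), R₀ ≥ 0, and n₀ ∈ ℕ such that for every composition w = f_n ∘ ⋯ ∘ f_1 of maps from F of length n ≥ n₀ and every x with d(x,b) > R₀, one has d(w(x), b) < ρ^n d(x,b). Assume also that each f ∈ F maps bounded sets to bounded sets. Then for every bounded set C ⊆ X there exists a bounded set Ĉ ⊇ C with f(Ĉ) ⊆ Ĉ for all f ∈ F. -/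
/-- Let `F` be a finite family of self-maps of a metric space that
eventually uniformly contracts distances to a basepoint `b` outside the ball of radius
`R₀` (for compositions of length `≥ n₀`), each member of `F` mapping bounded sets to
bounded sets. Then every bounded set `C` is contained in a bounded set `Ĉ` invariant
under all maps of `F`. -/
theorem contracting_family_bounded_invariant_enlargement
    {X : Type*} [MetricSpace X] (b : X)
    (F : Set (X → X)) (hF : F.Finite)
    (ρ R₀ : ℝ) (hρ0 : 0 < ρ) (hρ1 : ρ < 1) (hR : 0 ≤ R₀) (n₀ : ℕ)
    (hcontr : ∀ l : List (X → X), n₀ ≤ l.length → (∀ f ∈ l, f ∈ F) →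
      ∀ x : X, R₀ < dist x b →
        dist (l.foldl (fun y f => f y) x) b < ρ ^ l.length * dist x b)
    (hbdd : ∀ f ∈ F, ∀ r : ℝ, ∃ r' : ℝ, ∀ x : X, dist x b ≤ r → dist (f x) b ≤ r') :
    ∀ C : Set X, Bornology.IsBounded C →
      ∃ Chat : Set X, C ⊆ Chat ∧ Bornology.IsBounded Chat ∧
        ∀ f ∈ F, f '' Chat ⊆ Chat := by
  classical
  intro C hC
  -- choose per-map bound functions
  choose g hg using hbdd
  set step : X → (X → X) → X := fun y f => f y with hstep
  -- a uniform bound function φ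
  set g' : (X → X) → ℝ → ℝ := fun f s => if h : f ∈ F then g f h s else 0 with hg'
  set φ : ℝ → ℝ := fun s => max s 0 + ∑ f ∈ hF.toFinset, |g' f s| with hφdef
  have hφ : ∀ (s : ℝ), ∀ f ∈ F, ∀ x : X, dist x b ≤ s → dist (f x) b ≤ φ s := by
    intro s f hf x hx
    have h1 : dist (f x) b ≤ g' f s := by
      simp only [hg', dif_pos hf]
      exact hg f hf s x hx
    have h2 : g' f s ≤ |g' f s| := le_abs_self _
    have h3 : |g' f s| ≤ ∑ f ∈ hF.toFinset, |g' f s| :=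
      Finset.single_le_sum (f := fun f => |g' f s|) (fun i _ => abs_nonneg _) (hF.mem_toFinset.mpr hf)
    have h4 : (0:ℝ) ≤ max s 0 := le_max_right _ _
    simp only [hφdef]
    linarith
  -- iterating φ bounds compositions
  have lemA : ∀ l : List (X → X), (∀ f ∈ l, f ∈ F) → ∀ (x : X) (s : ℝ),
      dist x b ≤ s → dist (l.foldl step x) b ≤ φ^[l.length] s := by
    intro l
    induction l with
    | nil => intro _ x s hx; simpa using hx
    | cons f t ih =>
      intro hl x s hx
      have hf : f ∈ F := hl f List.mem_cons_self
      have h1 : dist (f x) b ≤ φ s := hφ s f hf x hx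
      have h2 := ih (fun f' hf' => hl f' (List.mem_cons_of_mem _ hf')) (f x) (φ s) h1
      simpa [Function.iterate_succ_apply, step] using h2
  -- radius containing C, at least R₀
  obtain ⟨r0, hr0⟩ := hC.subset_closedBall b
  set r : ℝ := max r0 R₀ with hrdef
  have hCr : ∀ x ∈ C, dist x b ≤ r := fun x hx =>
    le_trans (Metric.mem_closedBall.mp (hr0 hx)) (le_max_left _ _)
  have hRr : R₀ ≤ r := le_max_right _ _
  -- the global bound
  set B : ℝ := (Finset.range (n₀ + 2)).sup' ⟨0, Finset.mem_range.mpr (by omega)⟩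
      (fun m => φ^[m] r) with hBdef
  have hB : ∀ m, m ≤ n₀ + 1 → φ^[m] r ≤ B := by
    intro m hm
    exact Finset.le_sup' (fun m => φ^[m] r) (Finset.mem_range.mpr (by omega))
  have hrB : r ≤ B := by simpa using hB 0 (by omega)
  -- key estimate: any word applied to a point of the r-ball stays in the B-ball
  have key : ∀ l : List (X → X), (∀ f ∈ l, f ∈ F) → ∀ x : X, dist x b ≤ r →
      dist (l.foldl step x) b ≤ B := by
    intro l hl x hx
    rcases Nat.eq_zero_or_pos l.length with hk0 | hkpos
    · rw [List.length_eq_zero_iff.mp hk0]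
      exact le_trans hx hrB
    set k := l.length with hk
    set S : Finset ℕ := (Finset.range k).filter
      (fun j => dist ((l.take j).foldl step x) b ≤ r) with hSdef
    have hS : S.Nonempty := ⟨0, by
      simp only [hSdef, Finset.mem_filter, Finset.mem_range]
      exact ⟨hkpos, by simpa using hx⟩⟩
    set j := S.max' hS with hjdef
    have hjS : j ∈ S := S.max'_mem hS
    have hjk : j < k := Finset.mem_range.mp (Finset.mem_filter.mp hjS).1
    have hjr : dist ((l.take j).foldl step x) b ≤ r := (Finset.mem_filter.mp hjS).2
    have hmax : ∀ i, j < i → i < k → r < dist ((l.take i).foldl step x) b := by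
      intro i hji hik
      by_contra hcon
      push_neg at hcon
      have : i ∈ S := Finset.mem_filter.mpr ⟨Finset.mem_range.mpr hik, hcon⟩
      exact absurd (S.le_max' i this) (by omega)
    have hdec : l.foldl step x = (l.drop j).foldl step ((l.take j).foldl step x) := by
      conv_lhs => rw [← List.take_append_drop j l]
      rw [List.foldl_append]
    have hdropmem : ∀ f ∈ l.drop j, f ∈ F := fun f hf => hl f (List.drop_subset _ _ hf)
    by_cases h1 : k - j ≤ n₀ + 1
    · -- short tail
      have := lemA (l.drop j) hdropmem _ r hjr
      rw [hdec]
      refine le_trans this ?_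
      have hlen : (l.drop j).length = k - j := by simp [hk]
      rw [hlen]
      exact hB _ h1
    · -- long tail: contraction applies
      push_neg at h1
      have hj1k : j + 1 < k := by omega
      set y : X := (l.take (j + 1)).foldl step x with hydef
      have hyfar : r < dist y b := hmax (j + 1) (by omega) hj1k
      have hyle : dist y b ≤ B := by
        have hsplit : l.take (j + 1) = l.take j ++ (l.drop j).take 1 := List.take_add
        have hfold : y = ((l.drop j).take 1).foldl step ((l.take j).foldl step x) := by
          rw [hydef, hsplit, List.foldl_append]
        have hmem : ∀ f ∈ (l.drop j).take 1, f ∈ F := fun f hf =>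
          hdropmem f (List.take_subset _ _ hf)
        have := lemA ((l.drop j).take 1) hmem _ r hjr
        rw [hfold]
        refine le_trans this ?_
        have hlen : ((l.drop j).take 1).length = 1 := by
          simp [hk]
          omega
        rw [hlen]
        exact hB 1 (by omega)
      have hdec2 : l.foldl step x = (l.drop (j + 1)).foldl step y := by
        conv_lhs => rw [← List.take_append_drop (j + 1) l]
        rw [List.foldl_append]
      have hmem2 : ∀ f ∈ l.drop (j + 1), f ∈ F := fun f hf => hl f (List.drop_subset _ _ hf)
      have hlen2 : n₀ ≤ (l.drop (j + 1)).length := by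
        simp only [List.length_drop]
        omega
      have hcon := hcontr (l.drop (j + 1)) hlen2 hmem2 y (lt_of_le_of_lt hRr hyfar)
      have hpow : ρ ^ (l.drop (j + 1)).length ≤ 1 :=
        pow_le_one₀ (le_of_lt hρ0) (le_of_lt hρ1)
      have : dist (l.foldl step x) b < dist y b := by
        rw [hdec2]
        calc dist ((l.drop (j + 1)).foldl step y) b
            < ρ ^ (l.drop (j + 1)).length * dist y b := hcon
          _ ≤ 1 * dist y b := by
              exact mul_le_mul_of_nonneg_right hpow dist_nonneg
          _ = dist y b := one_mul _
      exact le_trans (le_of_lt this) hyle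
  -- the invariant enlargement
  refine ⟨{y | ∃ l : List (X → X), (∀ f ∈ l, f ∈ F) ∧ ∃ x ∈ C, y = l.foldl step x},
    ?_, ?_, ?_⟩
  · intro x hx
    exact ⟨[], by simp, x, hx, rfl⟩
  · refine Bornology.IsBounded.subset (Metric.isBounded_closedBall (x := b) (r := B)) ?_
    rintro y ⟨l, hl, x, hx, rfl⟩
    exact Metric.mem_closedBall.mpr (key l hl x (hCr x hx))
  · rintro f hf y ⟨z, ⟨l, hl, x, hx, rfl⟩, rfl⟩
    refine ⟨l ++ [f], ?_, x, hx, ?_⟩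
    · intro f' hf'
      rcases List.mem_append.mp hf' with h | h
      · exact hl f' h
      · simpa using (List.mem_singleton.mp h) ▸ hf
    · rw [List.foldl_append]
      rfl
end
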